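/- If a finite graph G is 2-dismantlable, then G is cop-win. -/

import Mathlib

/-- The closed neighbourhood `N[v]` of a vertex. -/
def closedNbhd {V : Type*} (G : SimpleGraph V) (v : V) : Set V :=
  insert v {u | G.Adj v u}

/-- `v` dominates `u`: `N[v] ⊇ N[u]`. -/
def Dominates {V : Type*} (G : SimpleGraph V) (v u : V) : Prop :=
  closedNbhd G u ⊆ closedNbhd G v

/-- `v` dominates `u` in the subgraph induced on `S`. -/
def DominatesOn {V : Type*} (G : SimpleGraph V) (S : Set V) (v u : V) : Prop :=
  ∀ w ∈ S, w ∈ closedNbhd G u → w ∈ closedNbhd G v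

/-- A (finite) graph is dismantlable: its vertices can be ordered `v_1, …, v_n` so that
for each `i < n` some later `v_j` dominates `v_i` in the subgraph induced on
`{v_i, …, v_n}`. -/
def Dismantlable {V : Type*} (G : SimpleGraph V) : Prop :=
  ∃ (n : ℕ) (e : Fin n ≃ V), ∀ i : Fin n, (i : ℕ) + 1 < n →
    ∃ j : Fin n, i < j ∧
      DominatesOn G {w | ∃ k : Fin n, i ≤ k ∧ e k = w} (e j) (e i)

/-- A full-information cop strategy: an initial vertex, and a move function taking the
current cop and robber positions to a new cop position, which must be the current one or
an adjacent one. -/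
structure CopStrategy {V : Type*} (G : SimpleGraph V) where
  init : V
  move : V → V → V
  valid : ∀ c r, move c r = c ∨ G.Adj c (move c r)

/-- A full-information robber strategy: an initial vertex chosen knowing the cop's start,
and a move function taking the cop's (just updated) position and the robber's position to
a new robber position, which must be the current one or an adjacent one. -/
structure RobberStrategy {V : Type*} (G : SimpleGraph V) where
  init : V → V
  move : V → V → V
  valid : ∀ c r, move c r = r ∨ G.Adj r (move c r)

/-- The pair of (cop, robber) positions after `k` full rounds of play: the cop moves
first in each round, then the robber responds. -/
def play {V : Type*} (G : SimpleGraph V) (cs : CopStrategy G) (rs : RobberStrategy G) :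
    ℕ → V × V
  | 0 => (cs.init, rs.init cs.init)
  | k + 1 =>
      let p := play G cs rs k
      let c' := cs.move p.1 p.2
      (c', rs.move c' p.2)

/-- The cop wins: there is a cop strategy such that against every robber strategy, at some
round the cop's move lands on the robber's current vertex. -/
def CopWin {V : Type*} (G : SimpleGraph V) : Prop :=
  ∃ cs : CopStrategy G, ∀ rs : RobberStrategy G,
    ∃ k : ℕ, (play G cs rs (k + 1)).1 = (play G cs rs k).2

/-- A graph is 2-dismantlable if either it has fewer than 7 vertices and is cop-win, or
it has two distinct vertices `a`, `b`, each dominated by a vertex outside `{a, b}`, such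
that removing `a` and `b` leaves a 2-dismantlable graph. -/
inductive TwoDismantlable : {V : Type} → SimpleGraph V → Prop
  | small {V : Type} (G : SimpleGraph V) (hsmall : Nat.card V < 7) (hcw : CopWin G) :
      TwoDismantlable G
  | step {V : Type} (G : SimpleGraph V) (a b : V) (hab : a ≠ b)
      (ha : ∃ v : V, v ≠ a ∧ v ≠ b ∧ Dominates G v a)
      (hb : ∃ v : V, v ≠ a ∧ v ≠ b ∧ Dominates G v b)
      (hrec : TwoDismantlable (G.induce {w | w ≠ a ∧ w ≠ b})) :
      TwoDismantlable G

/-!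
If `v ≠ a` dominates `a`, the fold fixing `G - a` and sending `a` to `v` is a retraction of `G`
onto `G - a` that maps closed neighbourhoods into closed neighbourhoods. So the cop can play a
winning strategy of `G - a` against the image of the robber, capturing him outright whenever he
is within reach. When the cop catches the image, either he has caught the robber, or the robber
is on `a` and the cop on `v`; as `N[a] ⊆ N[v]`, the robber is then caught one move later.
Applying this to the two dominated vertices of each step of a 2-dismantling, one at a time,
reduces the theorem to its cop-win base case.
-/

variable {V W : Type*} {G : SimpleGraph V}

theorem mem_closedNbhd_iff {x y : V} : y ∈ closedNbhd G x ↔ y = x ∨ G.Adj x y := Iff.rfl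

theorem mem_closedNbhd_self (G : SimpleGraph V) (x : V) : x ∈ closedNbhd G x := Or.inl rfl

theorem mem_closedNbhd_comm {x y : V} : y ∈ closedNbhd G x ↔ x ∈ closedNbhd G y := by
  simp only [mem_closedNbhd_iff, eq_comm, G.adj_comm]

theorem mem_closedNbhd_induce {S : Set V} {x y : S} :
    y ∈ closedNbhd (G.induce S) x ↔ (y : V) ∈ closedNbhd G x := by
  simp [mem_closedNbhd_iff, Subtype.ext_iff]

theorem SimpleGraph.Iso.apply_mem_closedNbhd_iff {H : SimpleGraph W} (e : G ≃g H) {x y : V} :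
    e y ∈ closedNbhd H (e x) ↔ y ∈ closedNbhd G x := by
  simp only [mem_closedNbhd_iff, e.injective.eq_iff, e.map_adj_iff]

theorem Dominates.induce {S : Set V} {v u : S} (h : Dominates G v u) :
    Dominates (G.induce S) v u :=
  fun _ hw => mem_closedNbhd_induce.2 (h (mem_closedNbhd_induce.1 hw))

def IsLazyWalk (G : SimpleGraph V) (t : ℕ → V) : Prop :=
  ∀ k, t (k + 1) ∈ closedNbhd G (t k)

namespace CopStrategy

def pursue (cs : CopStrategy G) (t : ℕ → V) : ℕ → V
  | 0 => cs.init
  | k + 1 => cs.move (cs.pursue t k) (t k)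

def Wins (cs : CopStrategy G) : Prop :=
  ∀ t, IsLazyWalk G t → ∃ k, cs.pursue t (k + 1) = t k

end CopStrategy

open Classical in
/-- A robber imitating the walk `t` as far as a positional strategy can: in a state
`(cs.pursue t (m + 1), t m)` he moves to `t (m + 1)`, for one such `m`. -/
noncomputable def RobberStrategy.ofWalk (cs : CopStrategy G) {t : ℕ → V} (ht : IsLazyWalk G t) :
    RobberStrategy G where
  init _ := t 0
  move c r := if h : ∃ m, cs.pursue t (m + 1) = c ∧ t m = r then t (h.choose + 1) else r
  valid c r := by
    split_ifs with h
    · have hstep := ht h.choose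
      rw [h.choose_spec.2] at hstep
      exact hstep
    · exact Or.inl rfl

theorem exists_play_ofWalk_eq (cs : CopStrategy G) {t : ℕ → V} (ht : IsLazyWalk G t) (k : ℕ) :
    ∃ m, play G cs (.ofWalk cs ht) k = (cs.pursue t m, t m) := by
  induction k with
  | zero => exact ⟨0, rfl⟩
  | succ k ih =>
    obtain ⟨m, hm⟩ := ih
    have hex : ∃ m', cs.pursue t (m' + 1) = cs.pursue t (m + 1) ∧ t m' = t m := ⟨m, rfl, rfl⟩
    have hmove : (RobberStrategy.ofWalk cs ht).move (cs.pursue t (m + 1)) (t m) =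
        t (hex.choose + 1) := dif_pos hex
    refine ⟨hex.choose + 1, ?_⟩
    simp only [play, hm]
    exact Prod.ext hex.choose_spec.1.symm hmove

theorem play_fst_eq_pursue (cs : CopStrategy G) (rs : RobberStrategy G) (k : ℕ) :
    (play G cs rs k).1 = cs.pursue (fun k => (play G cs rs k).2) k := by
  induction k with
  | zero => rfl
  | succ k ih => exact congrArg (cs.move · _) ih

/-- The image of a robber under a fold is a lazy walk but need not follow a positional
strategy, hence this reformulation. -/
theorem copWin_iff_exists_wins : CopWin G ↔ ∃ cs : CopStrategy G, cs.Wins := by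
  constructor
  · rintro ⟨cs, hcs⟩
    refine ⟨cs, fun t ht => ?_⟩
    obtain ⟨k, hk⟩ := hcs (.ofWalk cs ht)
    obtain ⟨m, hm⟩ := exists_play_ofWalk_eq cs ht k
    simp only [play, hm] at hk
    exact ⟨m, hk⟩
  · rintro ⟨cs, hcs⟩
    refine ⟨cs, fun rs => ?_⟩
    obtain ⟨k, hk⟩ := hcs (fun k => (play G cs rs k).2) (fun k => rs.valid _ _)
    exact ⟨k, (play_fst_eq_pursue cs rs (k + 1)).trans hk⟩

section Iso

variable {H : SimpleGraph W} (e : G ≃g H)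

def CopStrategy.map (cs : CopStrategy G) : CopStrategy H where
  init := e cs.init
  move c r := e (cs.move (e.symm c) (e.symm r))
  valid c r := by
    have hstep : cs.move (e.symm c) (e.symm r) ∈ closedNbhd G (e.symm c) := cs.valid _ _
    rw [← e.apply_mem_closedNbhd_iff, e.apply_symm_apply] at hstep
    exact hstep

theorem CopStrategy.pursue_map (cs : CopStrategy G) (t : ℕ → W) (k : ℕ) :
    (cs.map e).pursue t k = e (cs.pursue (e.symm ∘ t) k) := by
  induction k with
  | zero => rfl
  | succ k ih =>
    change e (cs.move (e.symm ((cs.map e).pursue t k)) (e.symm (t k))) = _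
    rw [ih, e.symm_apply_apply]
    rfl

theorem CopStrategy.Wins.map {cs : CopStrategy G} (hcs : cs.Wins) : (cs.map e).Wins := by
  intro t ht
  have hwalk : IsLazyWalk G (e.symm ∘ t) := fun k => e.symm.apply_mem_closedNbhd_iff.2 (ht k)
  obtain ⟨k, hk⟩ := hcs _ hwalk
  refine ⟨k, ?_⟩
  rw [cs.pursue_map, hk, Function.comp_apply, e.apply_symm_apply]

end Iso

theorem CopWin.of_iso {H : SimpleGraph W} (h : CopWin G) (e : G ≃g H) : CopWin H := by
  obtain ⟨cs, hcs⟩ := copWin_iff_exists_wins.1 h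
  exact copWin_iff_exists_wins.2 ⟨_, hcs.map e⟩

section Fold

variable {a v : V} (hva : v ≠ a)

open Classical in
noncomputable def fold (w : V) : ({w | w ≠ a} : Set V) :=
  if h : w = a then ⟨v, hva⟩ else ⟨w, h⟩

theorem fold_self : fold hva a = ⟨v, hva⟩ := dif_pos rfl

theorem fold_of_ne {w : V} (hw : w ≠ a) : fold hva w = ⟨w, hw⟩ := dif_neg hw

theorem fold_mem_closedNbhd (hdom : Dominates G v a) {x y : V}
    (hxy : y ∈ closedNbhd G x) :
    fold hva y ∈ closedNbhd (G.induce {w | w ≠ a}) (fold hva x) := by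
  rw [mem_closedNbhd_induce]
  by_cases hx : x = a <;> by_cases hy : y = a
  · subst hx hy
    rw [fold_self]
    exact mem_closedNbhd_self G v
  · subst hx
    rw [fold_self, fold_of_ne hva hy]
    exact hdom hxy
  · subst hy
    rw [fold_self, fold_of_ne hva hx, mem_closedNbhd_comm]
    exact hdom (mem_closedNbhd_comm.1 hxy)
  · rwa [fold_of_ne hva hx, fold_of_ne hva hy]

open Classical in
noncomputable def CopStrategy.lift (cs : CopStrategy (G.induce {w | w ≠ a})) : CopStrategy G where
  init := cs.init
  move c r :=
    if r ∈ closedNbhd G c then r else if h : c = a then c else cs.move ⟨c, h⟩ (fold hva r)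
  valid c r := by
    split_ifs with hr hc
    · exact hr
    · exact mem_closedNbhd_self G c
    · exact mem_closedNbhd_induce.1 (cs.valid ⟨c, hc⟩ _)

theorem CopStrategy.Wins.lift (hdom : Dominates G v a) {cs : CopStrategy (G.induce {w | w ≠ a})}
    (hcs : cs.Wins) : (cs.lift hva).Wins := by
  intro t ht
  by_contra! hescape
  set c := (cs.lift hva).pursue t
  have hfar : ∀ k, t k ∉ closedNbhd G (c k) := fun k hk => hescape k (if_pos hk)
  have hshadow : ∀ k, c k = cs.pursue (fold hva ∘ t) k := by
    intro k
    induction k with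
    | zero => rfl
    | succ k ih =>
      have hca : c k ≠ a := ih ▸ (cs.pursue _ k).2
      have hmove : c (k + 1) = cs.move ⟨c k, hca⟩ (fold hva (t k)) :=
        (if_neg (hfar k)).trans (dif_neg hca)
      have hpos : (⟨c k, hca⟩ : ({w | w ≠ a} : Set V)) = cs.pursue _ k := Subtype.ext ih
      rw [hmove, hpos]
      rfl
  obtain ⟨k, hk⟩ := hcs _ fun k => fold_mem_closedNbhd hva hdom (ht k)
  have hcatch : c (k + 1) = fold hva (t k) := (hshadow (k + 1)).trans (congrArg Subtype.val hk)
  by_cases hta : t k = a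
  · rw [hta, fold_self] at hcatch
    apply hfar (k + 1)
    rw [hcatch]
    exact hdom (hta ▸ ht k)
  · rw [fold_of_ne hva hta] at hcatch
    exact hescape k hcatch

end Fold

theorem copWin_of_dominates {a v : V} (hva : v ≠ a) (hdom : Dominates G v a)
    (h : CopWin (G.induce {w | w ≠ a})) : CopWin G := by
  obtain ⟨cs, hcs⟩ := copWin_iff_exists_wins.1 h
  exact copWin_iff_exists_wins.2 ⟨_, hcs.lift hva hdom⟩

def induceNeNeIso {a b : V} (hba : b ≠ a) :
    G.induce {w | w ≠ a ∧ w ≠ b} ≃g (G.induce {w | w ≠ a}).induce {w | w ≠ ⟨b, hba⟩} where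
  toFun w := ⟨⟨w, w.2.1⟩, fun h => w.2.2 (congrArg Subtype.val h)⟩
  invFun w := ⟨w.1, w.1.2, fun h => w.2 (Subtype.ext h)⟩
  left_inv _ := rfl
  right_inv _ := rfl
  map_rel_iff' := Iff.rfl

theorem twoDismantlable_copWin_general {V : Type} (G : SimpleGraph V)
    (h : TwoDismantlable G) : CopWin G := by
  induction h with
  | small _ _ hcw => exact hcw
  | step G a b hab ha hb _ ih =>
    obtain ⟨va, hvaa, -, hdoma⟩ := ha
    obtain ⟨vb, hvba, hvbb, hdomb⟩ := hb
    have hGa : CopWin (G.induce {w | w ≠ a}) :=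
      copWin_of_dominates (a := ⟨b, hab.symm⟩) (v := ⟨vb, hvba⟩)
        (fun hvb => hvbb (congrArg Subtype.val hvb)) hdomb.induce
        (ih.of_iso (induceNeNeIso hab.symm))
    exact copWin_of_dominates hvaa hdoma hGa

/-- every finite 2-dismantlable graph is cop-win. -/
theorem twoDismantlable_copWin {V : Type} [Finite V] (G : SimpleGraph V)
    (h : TwoDismantlable G) : CopWin G :=
  twoDismantlable_copWin_general G h
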